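/- arXiv:2509.09570 — 3 statements merged into one kernel-verified Lean document; each statement's English description precedes it below -/
import Mathlib

section
/- Let A be an m×n Boolean matrix, k a field, and s ≥ 2. Let (i_1,j_1), …, (i_s,j_s) be positions with i_1, …, i_s pairwise distinct and j_1, …, j_s pairwise distinct. If the squarefree monomial X (i_1,j_1) ⋯ X (i_s,j_s) belongs to the determinantal ideal I_s(A[x]), then {(i_1,j_1), …, (i_s,j_s)} is an isolated set of A. -/
/-- The positions `p` and `q` form an isolated pair of ones of `A`. -/
def IsolatedPair {m n : ℕ} (A : Matrix (Fin m) (Fin n) Bool) (p q : Fin m × Fin n) : Prop :=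
  A p.1 p.2 = true ∧ A q.1 q.2 = true ∧ ¬(A p.1 q.2 = true ∧ A q.1 p.2 = true)

/-- `T` is a set of ones of `A` that are pairwise isolated. -/
def IsIsolatedSet {m n : ℕ} (A : Matrix (Fin m) (Fin n) Bool)
    (T : Finset (Fin m × Fin n)) : Prop :=
  (∀ p ∈ T, A p.1 p.2 = true) ∧ ∀ p ∈ T, ∀ q ∈ T, p ≠ q → IsolatedPair A p q

/-- The generic matrix `A[x]`: the `(i,j)` entry is the variable `X (i,j)` if
`A i j = true` and `0` otherwise. -/
noncomputable def AX {m n : ℕ} (k : Type*) [Field k] (A : Matrix (Fin m) (Fin n) Bool) :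
    Matrix (Fin m) (Fin n) (MvPolynomial (Fin m × Fin n) k) :=
  Matrix.of fun i j => if A i j = true then MvPolynomial.X (i, j) else 0

/-- The `t`-th determinantal ideal of `A[x]`, generated by the determinants of all
`t × t` submatrices of `A[x]`. -/
noncomputable def detIdeal {m n : ℕ} (k : Type*) [Field k]
    (A : Matrix (Fin m) (Fin n) Bool) (t : ℕ) : Ideal (MvPolynomial (Fin m × Fin n) k) :=
  Ideal.span {f | ∃ (ρ : Fin t → Fin m) (γ : Fin t → Fin n),
    Function.Injective ρ ∧ Function.Injective γ ∧
    f = (Matrix.of fun a b => AX k A (ρ a) (γ b)).det}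

/-!
Evaluate at the 0/1 point `v = 𝟙_P` for a set of positions `P` containing every `(i a, j a)` and
lying in the rows `i a`. The monomial becomes `1`, while `A[x]` becomes the 0/1 matrix of the ones
of `A` inside `P`. If that matrix has fewer than `s` distinct nonzero rows, all its `s × s` minors
vanish, hence so does all of `I_s(A[x])`, a contradiction. Taking `P = {(i a, j a)}` forces every
`A (i a) (j a)` to be true; adding `(i a, j b)` and `(i b, j a)` to `P` would make rows `i a` and
`i b` equal if the pair were not isolated.
-/

open Finset Function MvPolynomial

lemma Matrix.det_submatrix_eq_zero_of_card_rows_lt {ι κ R : Type*} [Fintype ι]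
    [DecidableEq (κ → R)] [CommRing R] (B : Matrix ι κ R) {s : ℕ}
    (hB : #((univ.image B).erase 0) < s) (ρ : Fin s → ι) (γ : Fin s → κ) :
    (B.submatrix ρ γ).det = 0 := by
  by_contra hdet
  have hne : ∀ a, B (ρ a) ≠ 0 := fun a ha =>
    hdet (Matrix.det_eq_zero_of_row_eq_zero a fun c => congrFun ha (γ c))
  have hinj : Injective (B ∘ ρ) := fun a b hab => by
    by_contra hab'
    exact hdet (Matrix.det_zero_of_row_eq hab' (funext fun c => congrFun hab (γ c)))
  have hsub : univ.image (B ∘ ρ) ⊆ (univ.image B).erase 0 := by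
    simp only [subset_iff, mem_image, mem_univ, true_and, forall_exists_index,
      forall_apply_eq_imp_iff]
    exact fun a => mem_erase.2 ⟨hne a, mem_image_of_mem _ (mem_univ _)⟩
  have := card_le_card hsub
  rw [card_image_of_injective _ hinj, card_univ, Fintype.card_fin] at this
  omega

lemma injective_comp_and_ne_zero_of_le_card_rows {ι κ M : Type*} [Fintype ι]
    [DecidableEq (κ → M)] [Zero M] (B : ι → κ → M) {s : ℕ} (r : Fin s → ι)
    (hB : ∀ x ∉ Set.range r, B x = 0) (hs : s ≤ #((univ.image B).erase 0)) :
    Injective (B ∘ r) ∧ ∀ a, B (r a) ≠ 0 := by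
  have hsub : (univ.image B).erase 0 ⊆ (univ.image (B ∘ r)).erase 0 := by
    intro x
    simp only [mem_erase, mem_image, mem_univ, true_and, and_imp, forall_exists_index]
    rintro hx y rfl
    obtain ⟨a, rfl⟩ : y ∈ Set.range r := by_contra fun hy => hx (hB y hy)
    exact ⟨hx, a, rfl⟩
  have hcard : s ≤ #(univ.image (B ∘ r)) := hs.trans ((card_le_card hsub).trans card_erase_le)
  refine ⟨fun a b hab => ?_, fun a ha => ?_⟩
  · by_contra hne
    have hlt : #(univ.image (B ∘ r)) < #(univ : Finset (Fin s)) := card_image_le.lt_of_ne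
      fun h => hne (card_image_iff.1 h (mem_univ a) (mem_univ b) hab)
    simp only [card_univ, Fintype.card_fin] at hlt
    omega
  · have hlt := card_erase_lt_of_mem (mem_image_of_mem (B ∘ r) (mem_univ a))
    rw [comp_apply, ha] at hlt
    have := (hs.trans (card_le_card hsub)).trans_lt (hlt.trans_le card_image_le)
    simp only [card_univ, Fintype.card_fin, lt_self_iff_false] at this

section

variable {m n s : ℕ} {k : Type*} [Field k] {A : Matrix (Fin m) (Fin n) Bool}

lemma detIdeal_le_ker_eval (v : Fin m × Fin n → k)
    (hv : ∀ (ρ : Fin s → Fin m) (γ : Fin s → Fin n),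
      (((AX k A).map (eval v)).submatrix ρ γ).det = 0) :
    detIdeal k A s ≤ RingHom.ker (eval v) := by
  rw [detIdeal, Ideal.span_le]
  rintro _ ⟨ρ, γ, -, -, rfl⟩
  exact (RingHom.map_det _ _).trans (hv ρ γ)

variable (k A) in
def onesMatrixOn (P : Finset (Fin m × Fin n)) : Matrix (Fin m) (Fin n) k :=
  Matrix.of fun r c => if A r c = true ∧ (r, c) ∈ P then 1 else 0

lemma AX_map_eval_indicator (P : Finset (Fin m × Fin n)) :
    (AX k A).map (eval fun p => if p ∈ P then 1 else 0) = onesMatrixOn k A P := by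
  ext r c
  by_cases hA : A r c = true <;> simp [AX, onesMatrixOn, hA]

variable {i : Fin s → Fin m} {j : Fin s → Fin n}

lemma onesMatrixOn_rows_injective_and_ne_zero_of_prod_X_mem_detIdeal
    {P : Finset (Fin m × Fin n)} (hP : ∀ a, (i a, j a) ∈ P)
    (hrows : ∀ p ∈ P, p.1 ∈ Set.range i)
    (h : (∏ a, X (i a, j a) : MvPolynomial (Fin m × Fin n) k) ∈ detIdeal k A s) :
    Injective (onesMatrixOn k A P ∘ i) ∧ ∀ a, onesMatrixOn k A P (i a) ≠ 0 := by
  classical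
  refine injective_comp_and_ne_zero_of_le_card_rows _ i (fun r hr => ?_) (not_lt.1 fun hlt => ?_)
  · ext c
    simp only [onesMatrixOn, Matrix.of_apply, Pi.zero_apply, ite_eq_right_iff]
    exact fun hrc => absurd (hrows _ hrc.2) hr
  · have hker := detIdeal_le_ker_eval (fun p => if p ∈ P then (1 : k) else 0)
      (fun ρ γ => by
        rw [AX_map_eval_indicator]
        exact Matrix.det_submatrix_eq_zero_of_card_rows_lt _ hlt ρ γ) h
    simp [RingHom.mem_ker, map_prod, hP] at hker

lemma apply_diag_eq_true_of_prod_X_mem_detIdeal (hi : Injective i)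
    (h : (∏ a, X (i a, j a) : MvPolynomial (Fin m × Fin n) k) ∈ detIdeal k A s) (a : Fin s) :
    A (i a) (j a) = true := by
  classical
  obtain ⟨c, hc⟩ := Function.ne_iff.1
    ((onesMatrixOn_rows_injective_and_ne_zero_of_prod_X_mem_detIdeal
      (P := univ.image fun a => (i a, j a)) (fun a => mem_image_of_mem _ (mem_univ a))
      (by simp) h).2 a)
  simp only [onesMatrixOn, Matrix.of_apply, mem_image, mem_univ, true_and, Prod.mk.injEq,
    hi.eq_iff, exists_eq_left, Pi.zero_apply, ne_eq, ite_eq_right_iff, one_ne_zero,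
    imp_false, not_not] at hc
  exact hc.2 ▸ hc.1

lemma not_apply_swap_of_prod_X_mem_detIdeal (hi : Injective i)
    (h : (∏ a, X (i a, j a) : MvPolynomial (Fin m × Fin n) k) ∈ detIdeal k A s) {a b : Fin s}
    (hab : a ≠ b) : ¬(A (i a) (j b) = true ∧ A (i b) (j a) = true) := by
  classical
  rintro ⟨hab1, hab2⟩
  set P := univ.image (fun a => (i a, j a)) ∪ {(i a, j b), (i b, j a)}
  have hrow : ∀ d, d = a ∨ d = b →
      onesMatrixOn k A P (i d) = fun c => if c = j a ∨ c = j b then 1 else 0 := by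
    intro d hd
    funext c
    refine if_congr ?_ rfl rfl
    simp only [P, mem_union, mem_image, mem_univ, true_and, mem_insert, mem_singleton,
      Prod.mk.injEq, hi.eq_iff]
    rcases hd with rfl | rfl <;> grind [apply_diag_eq_true_of_prod_X_mem_detIdeal hi h]
  refine hab ((onesMatrixOn_rows_injective_and_ne_zero_of_prod_X_mem_detIdeal (P := P)
    (fun c => mem_union_left _ (mem_image_of_mem _ (mem_univ c))) (by simp [P]) h).1 ?_)
  exact (hrow a (.inl rfl)).trans (hrow b (.inr rfl)).symm

end

theorem monomial_mem_detIdeal_isolatedSet_general (m n s : ℕ)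
    (A : Matrix (Fin m) (Fin n) Bool) (k : Type*) [Field k]
    (i : Fin s → Fin m) (j : Fin s → Fin n)
    (hi : Function.Injective i)
    (h : (∏ a : Fin s, MvPolynomial.X (i a, j a) : MvPolynomial (Fin m × Fin n) k)
      ∈ detIdeal k A s) :
    IsIsolatedSet A (Finset.image (fun a => (i a, j a)) Finset.univ) := by
  have hdiag := apply_diag_eq_true_of_prod_X_mem_detIdeal hi h
  simp only [IsIsolatedSet, IsolatedPair, mem_image, mem_univ, true_and, forall_exists_index,
    forall_apply_eq_imp_iff]
  refine ⟨hdiag, fun a b hpq => ⟨hdiag a, hdiag b, ?_⟩⟩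
  exact not_apply_swap_of_prod_X_mem_detIdeal hi h fun hab => hpq (hab ▸ rfl)

theorem monomial_mem_detIdeal_isolatedSet (m n s : ℕ) (hs : 2 ≤ s)
    (A : Matrix (Fin m) (Fin n) Bool) (k : Type*) [Field k]
    (i : Fin s → Fin m) (j : Fin s → Fin n)
    (hi : Function.Injective i) (hj : Function.Injective j)
    (h : (∏ a : Fin s, MvPolynomial.X (i a, j a) : MvPolynomial (Fin m × Fin n) k)
      ∈ detIdeal k A s) :
    IsIsolatedSet A (Finset.image (fun a => (i a, j a)) Finset.univ) :=
  monomial_mem_detIdeal_isolatedSet_general m n s A k i j hi h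
end

section
/- Let A be an m×n Boolean matrix that is solid block diagonal with r blocks, i.e. there exist surjective maps ρ : Fin m → Fin r and γ : Fin n → Fin r such that A i j = true ↔ ρ i = γ j. Then the Boolean rank of A equals r: brank(A) = r. -/
/-- `A` factors as a Boolean product of an `m × r` and an `r × n` Boolean matrix. -/
def BoolFactorization {m n : ℕ} (A : Matrix (Fin m) (Fin n) Bool) (r : ℕ) : Prop :=
  ∃ (V : Matrix (Fin m) (Fin r) Bool) (H : Matrix (Fin r) (Fin n) Bool),
    ∀ i j, A i j = true ↔ ∃ ℓ : Fin r, V i ℓ = true ∧ H ℓ j = true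

/-- The Boolean rank of a Boolean matrix. -/
noncomputable def brank {m n : ℕ} (A : Matrix (Fin m) (Fin n) Bool) : ℕ :=
  sInf {r | BoolFactorization A r}

/-!
The `r` indicator columns of the row classes times the `r` indicator rows of the column classes
factor `A`, so `brank A ≤ r`. Conversely, picking a row `p k ∈ ρ⁻¹ k` and a column
`q k ∈ γ⁻¹ k` for every block gives `r` ones of `A` no two of which lie in a common all-ones rectangle;
each factor `ℓ` of a Boolean factorization is such a rectangle, so there are at least `r` factors.
-/

section

variable {m n : ℕ} {A : Matrix (Fin m) (Fin n) Bool}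

theorem brank_le {r : ℕ} (h : BoolFactorization A r) : brank A ≤ r :=
  Nat.sInf_le h

theorem boolFactorization_brank {r : ℕ} (h : BoolFactorization A r) :
    BoolFactorization A (brank A) :=
  Nat.sInf_mem (s := {r | BoolFactorization A r}) ⟨r, h⟩

theorem boolFactorization_of_blocks {r : ℕ} (ρ : Fin m → Fin r) (γ : Fin n → Fin r)
    (hA : ∀ i j, A i j = true ↔ ρ i = γ j) : BoolFactorization A r := by
  refine ⟨fun i ℓ => decide (ρ i = ℓ), fun ℓ j => decide (ℓ = γ j), fun i j => ?_⟩
  simp only [hA, decide_eq_true_eq, exists_eq_left']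

theorem BoolFactorization.card_le_of_fooling {s : ℕ} (hA : BoolFactorization A s)
    {ι : Type*} [Fintype ι] (p : ι → Fin m) (q : ι → Fin n)
    (hdiag : ∀ k, A (p k) (q k) = true) (hoff : ∀ a b, A (p a) (q b) = true → a = b) :
    Fintype.card ι ≤ s := by
  obtain ⟨V, H, hVH⟩ := hA
  choose ℓ hV hH using fun k => (hVH (p k) (q k)).mp (hdiag k)
  have hinj : Function.Injective ℓ := fun a b hab =>
    hoff a b ((hVH _ _).mpr ⟨ℓ a, hV a, hab ▸ hH b⟩)
  simpa using Fintype.card_le_of_injective ℓ hinj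

end

theorem brank_solidBlockDiagonal (m n r : ℕ) (A : Matrix (Fin m) (Fin n) Bool)
    (ρ : Fin m → Fin r) (γ : Fin n → Fin r)
    (hρ : Function.Surjective ρ) (hγ : Function.Surjective γ)
    (hA : ∀ i j, A i j = true ↔ ρ i = γ j) :
    brank A = r := by
  have hfact : BoolFactorization A r := boolFactorization_of_blocks ρ γ hA
  have hρ' := Function.surjInv_eq hρ
  have hγ' := Function.surjInv_eq hγ
  refine le_antisymm (brank_le hfact) ?_
  simpa using (boolFactorization_brank hfact).card_le_of_fooling
    (Function.surjInv hρ) (Function.surjInv hγ)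
    (fun k => (hA _ _).mpr (by rw [hρ', hγ']))
    (fun a b hab => by simpa only [hρ', hγ'] using (hA _ _).mp hab)
end

section
/- Let n ≥ 3 and let J_n be the n×n identity complement Boolean matrix, defined by J_n i j = true ↔ i ≠ j. Then the isolation number of J_n equals 3: ι(J_n) = 3. -/
/-- The isolation number of `A`: the maximum cardinality of an isolated set. -/
noncomputable def isolationNumber {m n : ℕ} (A : Matrix (Fin m) (Fin n) Bool) : ℕ :=
  sSup {s | ∃ T : Finset (Fin m × Fin n), IsIsolatedSet A T ∧ T.card = s}

/-- The `n × n` identity complement matrix: ones everywhere off the diagonal. -/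
def identityComplement (n : ℕ) : Matrix (Fin n) (Fin n) Bool :=
  Matrix.of fun i j => decide (i ≠ j)

/-! Two isolated ones of any Boolean matrix lie in different rows and different columns. In
`J_n`, if `(a, b)` belongs to an isolated set then every other entry `(c, d)` has `d = a` or
`c = b`, since otherwise `J_n a d = J_n c b = true`; so besides `(a, b)` there is at most one
entry in row `b` and one in column `a`. The cyclic triple `(i, j), (j, k), (k, i)` of distinct
indices attains the bound 3. -/

theorem card_cycle {α : Type*} [DecidableEq α] {i j k : α}
    (hij : i ≠ j) (hjk : j ≠ k) (hki : k ≠ i) :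
    ({(i, j), (j, k), (k, i)} : Finset (α × α)).card = 3 := by
  rw [Finset.card_insert_of_notMem (by simp [hij, hki.symm]),
    Finset.card_pair (by simp [hjk])]

section IsolatedPair

variable {m n : ℕ} {A : Matrix (Fin m) (Fin n) Bool} {p q : Fin m × Fin n}

theorem IsolatedPair.fst_ne (h : IsolatedPair A p q) : p.1 ≠ q.1 := by
  intro hpq
  exact h.2.2 ⟨hpq ▸ h.2.1, hpq ▸ h.1⟩

theorem IsolatedPair.snd_ne (h : IsolatedPair A p q) : p.2 ≠ q.2 := by
  intro hpq
  exact h.2.2 ⟨hpq ▸ h.1, hpq ▸ h.2.1⟩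

end IsolatedPair

section IsIsolatedSet

variable {m n : ℕ} {A : Matrix (Fin m) (Fin n) Bool} {T : Finset (Fin m × Fin n)}

theorem IsIsolatedSet.injOn_fst (hT : IsIsolatedSet A T) :
    Set.InjOn Prod.fst (T : Set (Fin m × Fin n)) := by
  intro p hp q hq hpq
  by_contra hne
  exact (hT.2 p hp q hq hne).fst_ne hpq

theorem IsIsolatedSet.injOn_snd (hT : IsIsolatedSet A T) :
    Set.InjOn Prod.snd (T : Set (Fin m × Fin n)) := by
  intro p hp q hq hpq
  by_contra hne
  exact (hT.2 p hp q hq hne).snd_ne hpq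

theorem IsIsolatedSet.card_filter_fst_eq_le_one (hT : IsIsolatedSet A T) (i : Fin m) :
    (T.filter (·.1 = i)).card ≤ 1 := by
  refine Finset.card_le_one.mpr fun p hp q hq => ?_
  rw [Finset.mem_filter] at hp hq
  exact hT.injOn_fst hp.1 hq.1 (hp.2.trans hq.2.symm)

theorem IsIsolatedSet.card_filter_snd_eq_le_one (hT : IsIsolatedSet A T) (j : Fin n) :
    (T.filter (·.2 = j)).card ≤ 1 := by
  refine Finset.card_le_one.mpr fun p hp q hq => ?_
  rw [Finset.mem_filter] at hp hq
  exact hT.injOn_snd hp.1 hq.1 (hp.2.trans hq.2.symm)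

end IsIsolatedSet

section identityComplement

variable {n : ℕ}

@[simp]
theorem identityComplement_apply (i j : Fin n) :
    identityComplement n i j = true ↔ i ≠ j := by
  simp [identityComplement]

theorem isolatedPair_identityComplement_iff {p q : Fin n × Fin n} :
    IsolatedPair (identityComplement n) p q ↔
      p.1 ≠ p.2 ∧ q.1 ≠ q.2 ∧ (p.1 = q.2 ∨ q.1 = p.2) := by
  simp only [IsolatedPair, identityComplement_apply, not_and_or, not_not]

theorem IsIsolatedSet.card_le_three {T : Finset (Fin n × Fin n)}
    (hT : IsIsolatedSet (identityComplement n) T) : T.card ≤ 3 := by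
  obtain rfl | ⟨p, hp⟩ := T.eq_empty_or_nonempty
  · simp
  have hcover : T ⊆ {p} ∪ T.filter (·.2 = p.1) ∪ T.filter (·.1 = p.2) := by
    intro q hq
    by_cases hqp : q = p
    · simp [hqp]
    obtain ⟨-, -, h⟩ := isolatedPair_identityComplement_iff.mp (hT.2 p hp q hq (Ne.symm hqp))
    rcases h with h | h <;> simp [hq, h]
  calc T.card ≤ ({p} ∪ T.filter (·.2 = p.1) ∪ T.filter (·.1 = p.2)).card :=
        Finset.card_le_card hcover
    _ ≤ 1 + 1 + 1 := by
        grw [Finset.card_union_le, Finset.card_union_le, Finset.card_singleton,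
          hT.card_filter_snd_eq_le_one, hT.card_filter_fst_eq_le_one]

theorem isIsolatedSet_identityComplement_cycle {i j k : Fin n}
    (hij : i ≠ j) (hjk : j ≠ k) (hki : k ≠ i) :
    IsIsolatedSet (identityComplement n) {(i, j), (j, k), (k, i)} := by
  refine ⟨by simp [hij, hjk, hki], ?_⟩
  simp only [Finset.mem_insert, Finset.mem_singleton, isolatedPair_identityComplement_iff]
  rintro p (rfl | rfl | rfl) q (rfl | rfl | rfl) hpq <;> simp_all [eq_comm]

end identityComplement

theorem isolationNumber_identityComplement (n : ℕ) (hn : 3 ≤ n) :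
    isolationNumber (identityComplement n) = 3 := by
  let i : Fin n := ⟨0, by omega⟩
  let j : Fin n := ⟨1, by omega⟩
  let k : Fin n := ⟨2, by omega⟩
  have hij : i ≠ j := by simp [i, j, Fin.ext_iff]
  have hjk : j ≠ k := by simp [j, k, Fin.ext_iff]
  have hki : k ≠ i := by simp [k, i, Fin.ext_iff]
  refine IsGreatest.csSup_eq ⟨?_, ?_⟩
  · exact ⟨_, isIsolatedSet_identityComplement_cycle hij hjk hki, card_cycle hij hjk hki⟩
  · rintro _ ⟨T, hT, rfl⟩
    exact hT.card_le_three
end
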